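/- arXiv:0907.4592 — 2 statements merged into one kernel-verified Lean document; each statement's English description precedes it below -/
import Mathlib

section
/- Under hypotheses (H0)-(H3), the convergence norm satisfies the upper bound ρ(P) ≤ inf_{a ∈ ℝ^d} max(φ(a), φ₀(a)). -/
open scoped Classical BigOperators
open Filter

noncomputable section

namespace RWHalfspace

/-- `ℤ^d` modeled as `ℤ^{d-1} × ℤ`; the Lean parameter `d` is the paper's `d-1`,
so that the paper's hypothesis `d ≥ 1` is automatic. -/
abbrev Zd (d : ℕ) := (Fin d → ℤ) × ℤ
/-- The state space `E = ℤ^{d-1} × ℕ`. -/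
abbrev Ed (d : ℕ) := (Fin d → ℤ) × ℕ
/-- `ℝ^d` modeled as `ℝ^{d-1} × ℝ`. -/
abbrev Rd (d : ℕ) := (Fin d → ℝ) × ℝ

variable {d : ℕ}

/-- The scalar product `a · z` for `a ∈ ℝ^d`, `z ∈ ℤ^d`. -/
def dotZ (a : Rd d) (z : Zd d) : ℝ := (∑ i, a.1 i * (z.1 i : ℝ)) + a.2 * (z.2 : ℝ)

/-- The scalar product on `ℝ^d`. -/
def dotR (a b : Rd d) : ℝ := (∑ i, a.1 i * b.1 i) + a.2 * b.2

/-- The scalar product `a · z` for `a ∈ ℝ^d`, `z ∈ E = ℤ^{d-1} × ℕ`. -/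
def dotE (a : Rd d) (z : Ed d) : ℝ := (∑ i, a.1 i * (z.1 i : ℝ)) + a.2 * (z.2 : ℝ)

/-- The jump generating function `φ(a) = ∑_{z ∈ ℤ^d} μ(z) e^{a·z}`. -/
def phi (μ : Zd d → ℝ) (a : Rd d) : ℝ := ∑' z, μ z * Real.exp (dotZ a z)

/-- The difference `z' - z ∈ ℤ^d` of two points of `E`. -/
def jump (z z' : Ed d) : Zd d := (z'.1 - z.1, (z'.2 : ℤ) - (z.2 : ℤ))

/-- The transition kernel of the reflected random walk on `E = ℤ^{d-1} × ℕ`. -/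
def ker (μ μ₀ : Zd d → ℝ) (z z' : Ed d) : ℝ :=
  if z.2 = 0 then μ₀ (jump z z') else μ (jump z z')

/-- The `n`-step transition kernel `p^(n)`. -/
def kerN (μ μ₀ : Zd d → ℝ) : ℕ → Ed d → Ed d → ℝ
  | 0 => fun z z' => if z = z' then 1 else 0
  | n + 1 => fun z z' => ∑' w, kerN μ μ₀ n z w * ker μ μ₀ w z'

/-- The `n`-step kernel of the homogeneous random walk on `ℤ^d` with step distribution `μ`. -/
def homN (μ : Zd d → ℝ) : ℕ → Zd d → Zd d → ℝ
  | 0 => fun z z' => if z = z' then 1 else 0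
  | n + 1 => fun z z' => ∑' w, homN μ n z w * μ (z' - w)

/-- The step distribution of the last coordinate of the homogeneous random walk. -/
def lastStep (μ : Zd d → ℝ) (k : ℤ) : ℝ := ∑' x : Fin d → ℤ, μ (x, k)

/-- The `n`-step kernel of the last coordinate random walk on `ℤ`. -/
def lastN (μ : Zd d → ℝ) : ℕ → ℤ → ℤ → ℝ
  | 0 => fun k k' => if k = k' then 1 else 0
  | n + 1 => fun k k' => ∑' j, lastN μ n k j * lastStep μ (k' - j)

/-- The convergence norm `ρ(P) = limsup_n (p^(n)(z,z'))^{1/n}` (independent of `z, z'`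
by irreducibility; we take `z = z' = 0`). -/
def rho (μ μ₀ : Zd d → ℝ) : ℝ :=
  limsup (fun n : ℕ => (kerN μ μ₀ n 0 0) ^ ((n : ℝ)⁻¹)) atTop

/-- `μ` is a nonnegative measure on `ℤ^d` with `0 < μ(ℤ^d) ≤ 1`. -/
def IsMeasure (μ : Zd d → ℝ) : Prop := (∀ z, 0 ≤ μ z) ∧ 0 < ∑' z, μ z ∧ ∑' z, μ z ≤ 1

/-- (H0): `μ(x,y) = 0` for `y < -1` and `μ₀(x,y) = 0` for `y < 0`. -/
def H0 (μ μ₀ : Zd d → ℝ) : Prop :=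
  (∀ z : Zd d, z.2 < -1 → μ z = 0) ∧ (∀ z : Zd d, z.2 < 0 → μ₀ z = 0)

/-- (H1): the kernel `P` is irreducible on `E`. -/
def H1 (μ μ₀ : Zd d → ℝ) : Prop := ∀ z z' : Ed d, ∃ n, 0 < kerN μ μ₀ n z z'

/-- (H2): the homogeneous random walk with step distribution `μ` is irreducible on `ℤ^d`. -/
def H2 (μ : Zd d → ℝ) : Prop := ∀ z z' : Zd d, ∃ n, 0 < homN μ n z z'

/-- (H3) for a single measure: the jump generating function is finite everywhere
(the defining series converges for every `a ∈ ℝ^d`). -/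
def H3 (μ : Zd d → ℝ) : Prop := ∀ a : Rd d, Summable fun z => μ z * Real.exp (dotZ a z)

/-- (H4): the last coordinate of the `μ`-random walk is aperiodic
(the gcd of `{n : p^n(0,0) > 0}` equals `1`). -/
def H4 (μ : Zd d → ℝ) : Prop := ∀ m : ℕ, (∀ n : ℕ, 0 < lastN μ n 0 0 → m ∣ n) → m = 1

/-- The sublevel set `D^t = {a : φ(a) ≤ t}`. -/
def Dset (μ : Zd d → ℝ) (t : ℝ) : Set (Rd d) := {a | phi μ a ≤ t}

/-- `Θ^t = {α ∈ ℝ^{d-1} : inf_β max(φ(α,β), φ₀(α,β)) ≤ t}`. -/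
def Theta (μ μ₀ : Zd d → ℝ) (t : ℝ) : Set (Fin d → ℝ) :=
  {α | sInf (Set.range fun β : ℝ => max (phi μ (α, β)) (phi μ₀ (α, β))) ≤ t}

/-- `Ĥ^t = (Θ^t × ℝ) ∩ D^t`. -/
def Hhat (μ μ₀ : Zd d → ℝ) (t : ℝ) : Set (Rd d) :=
  {a | a.1 ∈ Theta μ μ₀ t ∧ phi μ a ≤ t}

/-- Partial derivative of `f : ℝ^d → ℝ` in the last coordinate. -/
def dBeta (f : Rd d → ℝ) (a : Rd d) : ℝ := fderiv ℝ f a (0, 1)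

/-- The (coordinate) gradient of `f : ℝ^d → ℝ`. -/
def gradV (f : Rd d → ℝ) (a : Rd d) : Rd d :=
  (fun i => fderiv ℝ f a (Pi.single i 1, 0), fderiv ℝ f a (0, 1))

/-- `∂₊D^t`: boundary points of `D^t` where the last coordinate of `∇φ` is `≥ 0`. -/
def dPlus (μ : Zd d → ℝ) (t : ℝ) : Set (Rd d) :=
  {a | a ∈ frontier (Dset μ t) ∧ 0 ≤ dBeta (phi μ) a}

/-- `∂₀D^t`: boundary points of `D^t` where the last coordinate of `∇φ` is `0`. -/
def dZero (μ : Zd d → ℝ) (t : ℝ) : Set (Rd d) :=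
  {a | a ∈ frontier (Dset μ t) ∧ dBeta (phi μ) a = 0}

/-- `Γ₊^t = Ĥ^t ∩ ∂₊D^t`. -/
def GammaPlus (μ μ₀ : Zd d → ℝ) (t : ℝ) : Set (Rd d) := Hhat μ μ₀ t ∩ dPlus μ t

/-- The normal cone `V_t(a)` to `Ĥ^t` at `a`. -/
def Vcone (μ μ₀ : Zd d → ℝ) (t : ℝ) (a : Rd d) : Set (Rd d) :=
  {q | ∀ a' ∈ Hhat μ μ₀ t, dotR q (a' - a) ≤ 0}

/-- `β̄ = min{b : φ(α,b) ≤ t}`. -/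
def betaBar (μ : Zd d → ℝ) (t : ℝ) (α : Fin d → ℝ) : ℝ := sInf {b : ℝ | phi μ (α, b) ≤ t}

/-- `ā^t`: the lowest point of `D^t` with the same first `d-1` coordinates as `a`. -/
def abar (μ : Zd d → ℝ) (t : ℝ) (a : Rd d) : Rd d := (a.1, betaBar μ t a.1)

/-- The Green function `G_t(z,z') = ∑_n t^{-n} p^(n)(z,z')`. -/
def green (μ μ₀ : Zd d → ℝ) (t : ℝ) (z z' : Ed d) : ℝ :=
  ∑' n, (t ^ n)⁻¹ * kerN μ μ₀ n z z'

/-- The `t`-Martin kernel `K_t(z,z') = G_t(z,z')/G_t(z₀,z')` with reference point `z₀`. -/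
def martin (μ μ₀ : Zd d → ℝ) (t : ℝ) (z₀ z z' : Ed d) : ℝ :=
  green μ μ₀ t z z' / green μ μ₀ t z₀ z'

/-- Euclidean norm on `ℝ^d = ℝ^{d-1} × ℝ`. -/
def euclNorm (a : Rd d) : ℝ := Real.sqrt ((∑ i, a.1 i ^ 2) + a.2 ^ 2)

/-- The point of `ℝ^d` corresponding to `z ∈ E`. -/
def vecE (z : Ed d) : Rd d := (fun i => (z.1 i : ℝ), (z.2 : ℝ))

/-- Euclidean distance from a point `v` to a set `S ⊆ ℝ^d`. -/
def distTo (S : Set (Rd d)) (v : Rd d) : ℝ := sInf ((fun q => euclNorm (v - q)) '' S)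

/-- The function `h_{a,t}` of the paper. -/
def hFun (μ μ₀ : Zd d → ℝ) (t : ℝ) (a : Rd d) (z : Ed d) : ℝ :=
  if a ∉ dZero μ t ∧ phi μ₀ (abar μ t a) < t then
    Real.exp (dotE a z)
      - ((t - phi μ₀ a) / (t - phi μ₀ (abar μ t a))) * Real.exp (dotE (abar μ t a) z)
  else if a = abar μ t a ∧ a ∈ dZero μ t ∧ phi μ₀ a < t then
    ((z.2 : ℝ) + dBeta (phi μ₀) a / (t - phi μ₀ a)) * Real.exp (dotE a z)
  else Real.exp (dotE (abar μ t a) z)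

/-!
For every `a`, the function `z ↦ e^{a·z}` on `E` satisfies `P e^{a·} ≤ max(φ(a), φ₀(a)) e^{a·}`:
from a point with `y > 0` the walk jumps according to `μ`, from `y = 0` according to `μ₀`, and the
reachable jumps are only part of `ℤ^d`. Iterating,
`p^(n)(0,0) ≤ ∑_{z'} p^(n)(0,z') e^{a·z'} ≤ max(φ(a), φ₀(a))^n`, and taking `n`-th roots gives
`ρ(P) ≤ max(φ(a), φ₀(a))`. The sums are taken in `ℝ≥0∞`, so no summability has to be tracked.
-/

lemma ofReal_tsum_le_tsum_ofReal {ι : Type*} {f : ι → ℝ} (hf : ∀ i, 0 ≤ f i) :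
    ENNReal.ofReal (∑' i, f i) ≤ ∑' i, ENNReal.ofReal (f i) := by
  by_cases h : Summable f
  · exact (ENNReal.ofReal_tsum_of_nonneg hf h).le
  · simp [tsum_eq_zero_of_not_summable h]

section UpperBound

variable {μ μ₀ : Zd d → ℝ}

lemma phi_nonneg (hμ : ∀ z, 0 ≤ μ z) (a : Rd d) : 0 ≤ phi μ a :=
  tsum_nonneg fun z => mul_nonneg (hμ z) (Real.exp_nonneg _)

lemma ker_nonneg (hμ : ∀ z, 0 ≤ μ z) (hμ₀ : ∀ z, 0 ≤ μ₀ z) (z z' : Ed d) :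
    0 ≤ ker μ μ₀ z z' := by
  unfold ker
  split_ifs
  exacts [hμ₀ _, hμ _]

lemma kerN_nonneg (hμ : ∀ z, 0 ≤ μ z) (hμ₀ : ∀ z, 0 ≤ μ₀ z) (n : ℕ) (z z' : Ed d) :
    0 ≤ kerN μ μ₀ n z z' := by
  induction n generalizing z' with
  | zero => unfold kerN; positivity
  | succ n ih => exact tsum_nonneg fun w => mul_nonneg (ih w) (ker_nonneg hμ hμ₀ w z')

lemma jump_injective (z : Ed d) : Function.Injective (jump z) := by
  intro z₁ z₂ h
  simp only [jump, Prod.mk.injEq, sub_left_inj, Nat.cast_inj] at h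
  exact Prod.ext h.1 h.2

lemma dotZ_jump (a : Rd d) (z z' : Ed d) :
    dotZ a (jump z z') = dotE a z' - dotE a z := by
  simp only [dotZ, dotE, jump, Pi.sub_apply, Int.cast_sub, Int.cast_natCast, mul_sub,
    Finset.sum_sub_distrib]
  ring

-- Reindex by the injective map `jump w` and split `e^{a·z'} = e^{a·(z'-w)} e^{a·w}`.
lemma tsum_ofReal_jump_mul_exp_le {ν : Zd d → ℝ} (hν : ∀ u, 0 ≤ ν u) {a : Rd d}
    (hs : Summable fun u => ν u * Real.exp (dotZ a u)) (w : Ed d) :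
    ∑' z', ENNReal.ofReal (ν (jump w z')) * ENNReal.ofReal (Real.exp (dotE a z'))
      ≤ ENNReal.ofReal (phi ν a) * ENNReal.ofReal (Real.exp (dotE a w)) := by
  have hterm : ∀ z' : Ed d,
      ENNReal.ofReal (ν (jump w z')) * ENNReal.ofReal (Real.exp (dotE a z'))
        = ENNReal.ofReal (ν (jump w z') * Real.exp (dotZ a (jump w z')))
            * ENNReal.ofReal (Real.exp (dotE a w)) := fun z' => by
    rw [← ENNReal.ofReal_mul (hν _), ← ENNReal.ofReal_mul
      (mul_nonneg (hν _) (Real.exp_nonneg _)), mul_assoc, ← Real.exp_add, dotZ_jump,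
      sub_add_cancel]
  calc ∑' z', ENNReal.ofReal (ν (jump w z')) * ENNReal.ofReal (Real.exp (dotE a z'))
      = (∑' z', ENNReal.ofReal (ν (jump w z') * Real.exp (dotZ a (jump w z'))))
          * ENNReal.ofReal (Real.exp (dotE a w)) := by
        rw [← ENNReal.tsum_mul_right]
        exact tsum_congr hterm
    _ ≤ (∑' u, ENNReal.ofReal (ν u * Real.exp (dotZ a u)))
          * ENNReal.ofReal (Real.exp (dotE a w)) := by
        gcongr
        exact ENNReal.tsum_comp_le_tsum_of_injective (jump_injective w) _
    _ = ENNReal.ofReal (phi ν a) * ENNReal.ofReal (Real.exp (dotE a w)) := by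
        rw [phi, ENNReal.ofReal_tsum_of_nonneg (fun u => mul_nonneg (hν u) (Real.exp_nonneg _)) hs]

lemma tsum_ofReal_ker_mul_exp_le (hμ : ∀ z, 0 ≤ μ z) (hμ₀ : ∀ z, 0 ≤ μ₀ z)
    (h3 : H3 μ) (h3' : H3 μ₀) (a : Rd d) (w : Ed d) :
    ∑' z', ENNReal.ofReal (ker μ μ₀ w z') * ENNReal.ofReal (Real.exp (dotE a z'))
      ≤ ENNReal.ofReal (max (phi μ a) (phi μ₀ a)) * ENNReal.ofReal (Real.exp (dotE a w)) := by
  by_cases hw : w.2 = 0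
  · simp only [ker, hw, if_true]
    exact (tsum_ofReal_jump_mul_exp_le hμ₀ (h3' a) w).trans (by gcongr; exact le_max_right _ _)
  · simp only [ker, hw, if_false]
    exact (tsum_ofReal_jump_mul_exp_le hμ (h3 a) w).trans (by gcongr; exact le_max_left _ _)

lemma tsum_ofReal_kerN_mul_exp_le (hμ : ∀ z, 0 ≤ μ z) (hμ₀ : ∀ z, 0 ≤ μ₀ z)
    (h3 : H3 μ) (h3' : H3 μ₀) (a : Rd d) (n : ℕ) (z : Ed d) :
    ∑' z', ENNReal.ofReal (kerN μ μ₀ n z z') * ENNReal.ofReal (Real.exp (dotE a z'))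
      ≤ ENNReal.ofReal (max (phi μ a) (phi μ₀ a)) ^ n
          * ENNReal.ofReal (Real.exp (dotE a z)) := by
  set M := ENNReal.ofReal (max (phi μ a) (phi μ₀ a))
  set e : Ed d → ENNReal := fun z' => ENNReal.ofReal (Real.exp (dotE a z'))
  induction n with
  | zero =>
    rw [tsum_eq_single z fun z' hz' => by simp [kerN, Ne.symm hz']]
    simp [kerN]
  | succ n ih =>
    calc ∑' z', ENNReal.ofReal (kerN μ μ₀ (n + 1) z z') * e z'
        ≤ ∑' z', (∑' w, ENNReal.ofReal (kerN μ μ₀ n z w) * ENNReal.ofReal (ker μ μ₀ w z'))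
            * e z' := by
          refine ENNReal.tsum_le_tsum fun z' => mul_le_mul_left ?_ _
          refine (ofReal_tsum_le_tsum_ofReal fun w =>
            mul_nonneg (kerN_nonneg hμ hμ₀ n z w) (ker_nonneg hμ hμ₀ w z')).trans_eq ?_
          exact tsum_congr fun w => ENNReal.ofReal_mul (kerN_nonneg hμ hμ₀ n z w)
      _ = ∑' w, ENNReal.ofReal (kerN μ μ₀ n z w)
            * ∑' z', ENNReal.ofReal (ker μ μ₀ w z') * e z' := by
          simp_rw [← ENNReal.tsum_mul_right, ← ENNReal.tsum_mul_left, mul_assoc]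
          exact ENNReal.tsum_comm
      _ ≤ ∑' w, ENNReal.ofReal (kerN μ μ₀ n z w) * (M * e w) :=
          ENNReal.tsum_le_tsum fun w =>
            mul_le_mul_right (tsum_ofReal_ker_mul_exp_le hμ hμ₀ h3 h3' a w) _
      _ = M * ∑' w, ENNReal.ofReal (kerN μ μ₀ n z w) * e w := by
          rw [← ENNReal.tsum_mul_left]
          exact tsum_congr fun w => by ring
      _ ≤ M * (M ^ n * e z) := mul_le_mul_right ih _
      _ = M ^ (n + 1) * e z := by ring

lemma kerN_mul_exp_le (hμ : ∀ z, 0 ≤ μ z) (hμ₀ : ∀ z, 0 ≤ μ₀ z)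
    (h3 : H3 μ) (h3' : H3 μ₀) (a : Rd d) (n : ℕ) (z z' : Ed d) :
    kerN μ μ₀ n z z' * Real.exp (dotE a z')
      ≤ max (phi μ a) (phi μ₀ a) ^ n * Real.exp (dotE a z) := by
  have hM : 0 ≤ max (phi μ a) (phi μ₀ a) := (phi_nonneg hμ a).trans (le_max_left _ _)
  rw [← ENNReal.ofReal_le_ofReal_iff (by positivity), ENNReal.ofReal_mul
    (kerN_nonneg hμ hμ₀ n z z'), ENNReal.ofReal_mul (by positivity), ENNReal.ofReal_pow hM]
  exact ENNReal.le_tsum z' |>.trans (tsum_ofReal_kerN_mul_exp_le hμ hμ₀ h3 h3' a n z)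

end UpperBound

lemma limsup_rpow_inv_le_of_le_pow {u : ℕ → ℝ} {M : ℝ} (hu : ∀ n, 0 ≤ u n) (hM : 0 ≤ M)
    (h : ∀ n, u n ≤ M ^ n) : limsup (fun n : ℕ => u n ^ ((n : ℝ)⁻¹)) atTop ≤ M := by
  refine limsup_le_of_le (isCoboundedUnder_le_of_le atTop fun n => Real.rpow_nonneg (hu n) _) ?_
  filter_upwards [eventually_ne_atTop 0] with n hn
  calc u n ^ ((n : ℝ)⁻¹) ≤ (M ^ n) ^ ((n : ℝ)⁻¹) :=
        Real.rpow_le_rpow (hu n) (h n) (by positivity)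
    _ = M := Real.pow_rpow_inv_natCast hM hn

theorem convergence_norm_le_general {d : ℕ} (μ μ₀ : Zd d → ℝ)
    (hμ : IsMeasure μ) (hμ₀ : IsMeasure μ₀)
    (h3 : H3 μ) (h3' : H3 μ₀) :
    rho μ μ₀ ≤ sInf (Set.range fun a : Rd d => max (phi μ a) (phi μ₀ a)) := by
  refine le_csInf (Set.range_nonempty _) ?_
  rintro _ ⟨a, rfl⟩
  refine limsup_rpow_inv_le_of_le_pow (kerN_nonneg hμ.1 hμ₀.1 · 0 0)
    ((phi_nonneg hμ.1 a).trans (le_max_left _ _)) fun n => ?_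
  simpa [dotE] using kerN_mul_exp_le hμ.1 hμ₀.1 h3 h3' a n 0 0

/-- under (H0)-(H3), the upper bound
`ρ(P) ≤ inf_{a ∈ ℝ^d} max(φ(a), φ₀(a))` holds. -/
theorem convergence_norm_le {d : ℕ} (μ μ₀ : Zd d → ℝ)
    (hμ : IsMeasure μ) (hμ₀ : IsMeasure μ₀)
    (h0 : H0 μ μ₀) (h1 : H1 μ μ₀) (h2 : H2 μ) (h3 : H3 μ) (h3' : H3 μ₀) :
    rho μ μ₀ ≤ sInf (Set.range fun a : Rd d => max (phi μ a) (phi μ₀ a)) :=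
  convergence_norm_le_general μ μ₀ hμ hμ₀ h3 h3'
end RWHalfspace
end
end

section
/- Assume (H0) and (H3), and let t > 0. Let a ∈ ℝ^d satisfy φ(a) = t, (∂φ/∂β)(a) = 0 (the partial derivative in the last coordinate), and φ₀(a) < t. Then the function h(x,y) = (y + c) e^{a·(x,y)} on E = ℤ^{d-1} × ℕ, where c = (∂φ₀/∂β)(a)/(t − φ₀(a)), satisfies Σ_{z'∈E} p(z,z') h(z') = t h(z) for every z ∈ E, i.e. h is t-harmonic for P. -/
open scoped Classical BigOperators
open Filter

noncomputable section

namespace RWHalfspace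

variable {d : ℕ}

/-!
Write `z' = z + w`. By (H0) the walk never leaves `E`, so for `ν = μ` (when `z₂ > 0`) or
`ν = μ₀` (when `z₂ = 0`) the sum over `z' ∈ E` is a sum over all jumps `w ∈ ℤ^d`:
`Σ_w ν(w) (z₂ + w₂ + c) e^{a·(z+w)} = e^{a·z} ((z₂ + c) φ_ν(a) + ∂_β φ_ν(a))`,
since `∂_β φ_ν(a) = Σ_w ν(w) w₂ e^{a·w}`. Termwise differentiation is justified by (H3): near `a`
the differentiated terms are dominated by `|ν(w)| e^{a·w + 2|w|₁}`, and
`e^{a·w + 2|w|₁} = e^{(a + 2 sign w)·w}` is a term of one of finitely many convergent series.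
For `z₂ > 0` the bracket is `t (z₂ + c)` because `φ(a) = t` and `∂_β φ(a) = 0`; for `z₂ = 0` it is
`c φ₀(a) + ∂_β φ₀(a) = c t` by the choice of `c`.
-/

def l1norm (z : Zd d) : ℝ := (∑ i, |(z.1 i : ℝ)|) + |(z.2 : ℝ)|

lemma l1norm_nonneg (z : Zd d) : 0 ≤ l1norm z :=
  add_nonneg (Finset.sum_nonneg fun _ _ => abs_nonneg _) (abs_nonneg _)

def ellZ (z : Zd d) : Rd d →L[ℝ] ℝ :=
  LinearMap.toContinuousLinearMap
    { toFun := fun v => dotZ v z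
      map_add' := fun v w => by
        simp only [dotZ, Prod.fst_add, Prod.snd_add, Pi.add_apply, add_mul,
          Finset.sum_add_distrib]
        ring
      map_smul' := fun c v => by
        simp only [dotZ, Prod.smul_fst, Prod.smul_snd, Pi.smul_apply, smul_eq_mul,
          RingHom.id_apply, mul_add, Finset.mul_sum, mul_assoc] }

@[simp]
lemma ellZ_apply (z : Zd d) (v : Rd d) : ellZ z v = dotZ v z := rfl

lemma abs_dotZ_le (v : Rd d) (z : Zd d) : |dotZ v z| ≤ ‖v‖ * l1norm z := by
  have hfst : ∀ i, |v.1 i| ≤ ‖v‖ := fun i => (norm_le_pi_norm v.1 i).trans (norm_fst_le v)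
  calc |dotZ v z| ≤ (∑ i, |v.1 i| * |(z.1 i : ℝ)|) + |v.2| * |(z.2 : ℝ)| := by
        refine (abs_add_le _ _).trans (add_le_add ((Finset.abs_sum_le_sum_abs _ _).trans ?_) ?_)
        · simp only [abs_mul, le_refl]
        · rw [abs_mul]
    _ ≤ (∑ i, ‖v‖ * |(z.1 i : ℝ)|) + ‖v‖ * |(z.2 : ℝ)| := by
        gcongr with i
        · exact hfst i
        · exact norm_snd_le v
    _ = ‖v‖ * l1norm z := by rw [l1norm, mul_add, Finset.mul_sum]

lemma norm_ellZ_le (z : Zd d) : ‖ellZ z‖ ≤ l1norm z :=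
  (ellZ z).opNorm_le_bound (l1norm_nonneg z) fun v => by
    rw [ellZ_apply, Real.norm_eq_abs, mul_comm]
    exact abs_dotZ_le v z

def signVec (s : (Fin d → SignType) × SignType) : Rd d := (fun i => (s.1 i : ℝ), (s.2 : ℝ))

lemma dotZ_signVec_sign (z : Zd d) :
    dotZ (signVec (fun i => SignType.sign (z.1 i : ℝ), SignType.sign (z.2 : ℝ))) z = l1norm z := by
  simp only [dotZ, signVec, l1norm, sign_mul_self]

lemma summable_abs_mul_exp_add_l1norm {μ : Zd d → ℝ} (h3 : H3 μ) (a : Rd d) (c : ℝ) :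
    Summable fun z => |μ z| * Real.exp (dotZ a z + c * l1norm z) := by
  have hdom : Summable fun z => ∑ s, |μ z| * Real.exp (dotZ (a + c • signVec s) z) :=
    summable_sum fun s _ => (h3 (a + c • signVec s)).abs.congr fun z => by
      rw [abs_mul, Real.abs_exp]
  refine Summable.of_nonneg_of_le (fun z => by positivity) (fun z => ?_) hdom
  set s := (fun i => SignType.sign (z.1 i : ℝ), SignType.sign (z.2 : ℝ))
  have hs : dotZ (a + c • signVec s) z = dotZ a z + c * l1norm z := by
    rw [← ellZ_apply, map_add, map_smul, ellZ_apply, ellZ_apply, dotZ_signVec_sign, smul_eq_mul]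
  calc |μ z| * Real.exp (dotZ a z + c * l1norm z)
      = |μ z| * Real.exp (dotZ (a + c • signVec s) z) := by rw [hs]
    _ ≤ ∑ s, |μ z| * Real.exp (dotZ (a + c • signVec s) z) :=
        Finset.single_le_sum (f := fun s => |μ z| * Real.exp (dotZ (a + c • signVec s) z))
          (fun _ _ => by positivity) (Finset.mem_univ s)

lemma norm_smul_ellZ_le {a x : Rd d} (hx : ‖x - a‖ ≤ 1) (r : ℝ) (z : Zd d) :
    ‖(r * Real.exp (dotZ x z)) • ellZ z‖ ≤ |r| * Real.exp (dotZ a z + 2 * l1norm z) := by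
  have hdot : dotZ x z ≤ dotZ a z + l1norm z := by
    have hsplit : dotZ x z = dotZ a z + dotZ (x - a) z := by
      rw [← ellZ_apply, ← ellZ_apply, ← ellZ_apply, ← map_add, add_sub_cancel]
    have := (le_abs_self _).trans (abs_dotZ_le (x - a) z)
    nlinarith [l1norm_nonneg z]
  have hell : ‖ellZ z‖ ≤ Real.exp (l1norm z) := by
    linarith [norm_ellZ_le z, Real.add_one_le_exp (l1norm z)]
  calc ‖(r * Real.exp (dotZ x z)) • ellZ z‖
      = |r| * Real.exp (dotZ x z) * ‖ellZ z‖ := by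
        rw [norm_smul, Real.norm_eq_abs, abs_mul, Real.abs_exp]
    _ ≤ |r| * Real.exp (dotZ a z + l1norm z) * Real.exp (l1norm z) := by gcongr
    _ = |r| * Real.exp (dotZ a z + 2 * l1norm z) := by
        rw [mul_assoc, ← Real.exp_add]; ring_nf

lemma hasFDerivAt_phi {μ : Zd d → ℝ} (h3 : H3 μ) (a : Rd d) :
    HasFDerivAt (phi μ) (∑' z, (μ z * Real.exp (dotZ a z)) • ellZ z) a := by
  show HasFDerivAt (fun y => ∑' z, μ z * Real.exp (dotZ y z)) _ a
  refine hasFDerivAt_tsum_of_isPreconnected (f' := fun z x => (μ z * Real.exp (dotZ x z)) • ellZ z)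
    (summable_abs_mul_exp_add_l1norm h3 a 2)
    Metric.isOpen_ball (convex_ball a 1).isPreconnected (fun z x _ => ?_) (fun z x hx => ?_)
    (Metric.mem_ball_self one_pos) (h3 a) (Metric.mem_ball_self one_pos)
  · rw [← smul_smul]
    exact ((ellZ z).hasFDerivAt.exp).const_mul (μ z)
  · rw [Metric.mem_ball, dist_eq_norm] at hx
    exact norm_smul_ellZ_le hx.le _ z

lemma hasSum_dBeta_phi {μ : Zd d → ℝ} (h3 : H3 μ) (a : Rd d) :
    HasSum (fun z => μ z * (z.2 : ℝ) * Real.exp (dotZ a z)) (dBeta (phi μ) a) := by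
  have hsum : Summable fun z => (μ z * Real.exp (dotZ a z)) • ellZ z :=
    .of_norm_bounded (summable_abs_mul_exp_add_l1norm h3 a 2)
      fun z => norm_smul_ellZ_le (by simp) _ z
  rw [dBeta, (hasFDerivAt_phi h3 a).fderiv]
  refine ((ContinuousLinearMap.apply ℝ ℝ ((0, 1) : Rd d)).hasSum hsum.hasSum).congr_fun
    fun z => ?_
  simp only [ContinuousLinearMap.apply_apply, map_smul, ellZ_apply, dotZ, Pi.zero_apply, zero_mul,
    Finset.sum_const_zero, one_mul, zero_add, smul_eq_mul]
  ring

lemma tsum_comp_jump {M : Type*} [AddCommMonoid M] [TopologicalSpace M] {f : Zd d → M}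
    (z : Ed d) (hf : ∀ w : Zd d, w.2 < -(z.2 : ℤ) → f w = 0) :
    ∑' z', f (jump z z') = ∑' w, f w := by
  refine Function.Injective.tsum_eq (fun z' z'' h => ?_) fun w hw => ?_
  · simp only [jump, Prod.mk.injEq, sub_left_inj] at h
    exact Prod.ext h.1 (by omega)
  · have hw2 : -(z.2 : ℤ) ≤ w.2 := not_lt.1 fun hlt => hw (hf w hlt)
    refine ⟨(z.1 + w.1, (z.2 + w.2).toNat), Prod.ext (add_sub_cancel_left _ _) ?_⟩
    simp only [jump]
    omega

lemma dotE_eq_dotZ_jump_add (a : Rd d) (z z' : Ed d) :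
    dotE a z' = dotZ a (jump z z') + dotE a z := by
  simp only [dotZ, dotE, jump, Pi.sub_apply]
  push_cast
  simp only [mul_sub, Finset.sum_sub_distrib]
  ring

lemma tsum_jump_mul_affine_mul_exp {ν : Zd d → ℝ} (h3 : H3 ν) (a : Rd d) (c : ℝ) (z : Ed d)
    (hν : ∀ w : Zd d, w.2 < -(z.2 : ℤ) → ν w = 0) :
    ∑' z', ν (jump z z') * (((z'.2 : ℝ) + c) * Real.exp (dotE a z'))
      = Real.exp (dotE a z) * (((z.2 : ℝ) + c) * phi ν a + dBeta (phi ν) a) := by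
  set F : Zd d → ℝ := fun w =>
    ν w * ((((z.2 : ℝ) + (w.2 : ℝ)) + c) * Real.exp (dotZ a w + dotE a z))
  have hF : ∀ z', ν (jump z z') * (((z'.2 : ℝ) + c) * Real.exp (dotE a z')) = F (jump z z') := by
    intro z'
    rw [dotE_eq_dotZ_jump_add a z z']
    simp only [F, jump]
    push_cast
    ring
  have hsum : HasSum F (Real.exp (dotE a z) * (((z.2 : ℝ) + c) * phi ν a + dBeta (phi ν) a)) := by
    have hphi : HasSum (fun w => ν w * Real.exp (dotZ a w)) (phi ν a) := (h3 a).hasSum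
    rw [mul_add, ← mul_assoc, mul_comm (Real.exp _)]
    refine ((hphi.mul_left _).add ((hasSum_dBeta_phi h3 a).mul_left _)).congr_fun fun w => ?_
    simp only [F, Real.exp_add]
    ring
  rw [tsum_congr hF, tsum_comp_jump z fun w hw => by simp [F, hν w hw], hsum.tsum_eq]

theorem h_second_case_harmonic_general {d : ℕ} (μ μ₀ : Zd d → ℝ)
    (h0 : H0 μ μ₀) (h3 : H3 μ) (h3' : H3 μ₀)
    (t : ℝ) (a : Rd d)
    (hphia : phi μ a = t) (hder : dBeta (phi μ) a = 0) (hphi0 : phi μ₀ a < t) :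
    ∀ z : Ed d,
      ∑' z' : Ed d, ker μ μ₀ z z' *
          (((z'.2 : ℝ) + dBeta (phi μ₀) a / (t - phi μ₀ a)) * Real.exp (dotE a z'))
        = t * (((z.2 : ℝ) + dBeta (phi μ₀) a / (t - phi μ₀ a)) * Real.exp (dotE a z)) := by
  intro z
  by_cases hz : z.2 = 0
  · simp only [ker, if_pos hz]
    rw [tsum_jump_mul_affine_mul_exp h3' a _ z fun w hw => h0.2 w (by omega), hz]
    have hgap : t - phi μ₀ a ≠ 0 := by linarith
    field_simp
    ring
  · simp only [ker, if_neg hz]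
    rw [tsum_jump_mul_affine_mul_exp h3 a _ z fun w hw => h0.1 w (by omega), hphia, hder]
    ring

/-- under (H0) and (H3), if `φ(a) = t`, `(∂φ/∂β)(a) = 0` and
`φ₀(a) < t`, then `h(x,y) = (y + c) e^{a·(x,y)}` with
`c = (∂φ₀/∂β)(a)/(t − φ₀(a))` is `t`-harmonic for `P`. -/
theorem h_second_case_harmonic {d : ℕ} (μ μ₀ : Zd d → ℝ)
    (hμ : IsMeasure μ) (hμ₀ : IsMeasure μ₀)
    (h0 : H0 μ μ₀) (h3 : H3 μ) (h3' : H3 μ₀)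
    (t : ℝ) (ht : 0 < t) (a : Rd d)
    (hphia : phi μ a = t) (hder : dBeta (phi μ) a = 0) (hphi0 : phi μ₀ a < t) :
    ∀ z : Ed d,
      ∑' z' : Ed d, ker μ μ₀ z z' *
          (((z'.2 : ℝ) + dBeta (phi μ₀) a / (t - phi μ₀ a)) * Real.exp (dotE a z'))
        = t * (((z.2 : ℝ) + dBeta (phi μ₀) a / (t - phi μ₀ a)) * Real.exp (dotE a z)) :=
  h_second_case_harmonic_general μ μ₀ h0 h3 h3' t a hphia hder hphi0

end RWHalfspace
end
end
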